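/- arXiv:0810.1639 — 2 statements merged into one kernel-verified Lean document; each statement's English description precedes it below -/
import Mathlib

section
/- At every stage i of the greedy increasing-list partition of a permutation, for every j ≥ 1, the last element so far added to list L_j is the maximum among all elements currently in lists L_k with k ≥ j. In particular, the last element of L_1 is the maximum element seen so far. -/
/-- One step of the greedy patience algorithm: append `x` to the first list whose
last element is smaller than `x`, or start a new list. Lists are kept in order of
creation and each list stores its elements in arrival order. -/
def greedyStep (x : ℕ) : List (List ℕ) → List (List ℕ)
  | [] => [[x]]
  | L :: rest => if L.getLastI < x then (L ++ [x]) :: rest else L :: greedyStep x rest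

/-- Greedy partition of a sequence into increasing lists `L₁, L₂, …`. -/
def greedy (A : List ℕ) : List (List ℕ) := A.foldl (fun s x => greedyStep x s) []

/-- `LDS(A)`: length of the longest strictly decreasing subsequence of `A`. -/
noncomputable def ldsL (A : List ℕ) : ℕ :=
  sSup {m | ∃ l : List ℕ, l.Sublist A ∧ l.Pairwise (· > ·) ∧ l.length = m}

/-- `A` can be partitioned (via a coloring of positions) into `k` strictly
increasing subsequences. -/
def SUSleL (A : List ℕ) (k : ℕ) : Prop :=
  ∃ c : ℕ → ℕ, (∀ i < A.length, c i < k) ∧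
    ∀ i j, i < j → j < A.length → c i = c j → A.getD i 0 < A.getD j 0

/-- `SUS(A)`: minimum number of increasing subsequences partitioning `A`. -/
noncomputable def susL (A : List ℕ) : ℕ := sInf {k | SUSleL A k}

/-- Least positive integer not occurring in `P` (the ACK value after receiving `P`). -/
noncomputable def ackL (P : List ℕ) : ℕ := sInf {k | 0 < k ∧ k ∉ P}

/-- Maximum of a list of naturals (0 for the empty list). -/
def maxL (P : List ℕ) : ℕ := P.foldr max 0

/-- Buffer size after receiving the packets `P`: `max P - (ackL P - 1)`. -/
noncomputable def bufL (P : List ℕ) : ℤ := (maxL P : ℤ) - ackL P + 1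

/-
The invariant is that the last element of each list bounds that list and all later ones. A greedy
step preserves it: if `x` is appended to `L_j`, it exceeds the old last element of `L_j`, which
bounded everything from `L_j` on, while every earlier list was skipped, so its last element is at
least `x`. Since a step only inserts `x`, the lists at any stage hold exactly the elements seen so
far, which gives the claim about `L_1`.
-/

def LastDominates : List (List ℕ) → Prop
  | [] => True
  | L :: rest => (∀ x ∈ (L :: rest).flatten, x ≤ L.getLastI) ∧ LastDominates rest

lemma List.getLastI_concat {α : Type*} [Inhabited α] (l : List α) (x : α) :
    (l ++ [x]).getLastI = x := by
  simp [List.getLastI_eq_getLast?_getD]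

lemma greedy_append_singleton (l : List ℕ) (x : ℕ) :
    greedy (l ++ [x]) = greedyStep x (greedy l) := by
  simp [greedy, List.foldl_append]

lemma flatten_greedyStep_perm (x : ℕ) (s : List (List ℕ)) :
    (greedyStep x s).flatten.Perm (x :: s.flatten) := by
  induction s with
  | nil => simp [greedyStep]
  | cons L rest ih =>
    simp only [greedyStep]
    split
    · simp
    · simpa using (ih.append_left L).trans List.perm_middle

lemma flatten_greedy_perm (l : List ℕ) : (greedy l).flatten.Perm l := by
  induction l using List.reverseRecOn with
  | nil => simp [greedy]
  | append_singleton l x ih =>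
    rw [greedy_append_singleton]
    exact (flatten_greedyStep_perm x _).trans ((ih.cons x).trans (List.perm_append_singleton x l).symm)

lemma LastDominates.greedyStep {s : List (List ℕ)} (x : ℕ) (h : LastDominates s) :
    LastDominates (greedyStep x s) := by
  induction s with
  | nil => simp [LastDominates, _root_.greedyStep, List.getLastI_eq_getLast?_getD]
  | cons L rest ih =>
    obtain ⟨hL, hrest⟩ := h
    have hmem : ∀ y ∈ (_root_.greedyStep x (L :: rest)).flatten,
        y = x ∨ y ∈ (L :: rest).flatten :=
      fun y hy => List.mem_cons.1 ((flatten_greedyStep_perm x _).subset hy)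
    by_cases hlt : L.getLastI < x
    · rw [_root_.greedyStep, if_pos hlt] at hmem ⊢
      refine ⟨fun y hy => ?_, hrest⟩
      rw [List.getLastI_concat]
      rcases hmem y hy with rfl | hy
      · exact le_rfl
      · exact (hL y hy).trans hlt.le
    · rw [_root_.greedyStep, if_neg hlt] at hmem ⊢
      refine ⟨fun y hy => ?_, ih hrest⟩
      rcases hmem y hy with rfl | hy
      · exact not_lt.1 hlt
      · exact hL y hy

lemma lastDominates_greedy (l : List ℕ) : LastDominates (greedy l) := by
  induction l using List.reverseRecOn with
  | nil => trivial
  | append_singleton l x ih =>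
    rw [greedy_append_singleton]
    exact ih.greedyStep x

lemma LastDominates.le_getLastI {s : List (List ℕ)} (h : LastDominates s) {j k : ℕ}
    (hj : j < s.length) (hk : k < s.length) (hjk : j ≤ k) {x : ℕ} (hx : x ∈ s[k]) :
    x ≤ s[j].getLastI := by
  induction s generalizing j k with
  | nil => simp at hj
  | cons L rest ih =>
    cases j with
    | zero => exact h.1 x (List.mem_flatten.2 ⟨_, List.getElem_mem hk, hx⟩)
    | succ j =>
      cases k with
      | zero => omega
      | succ k => exact ih h.2 _ _ (by omega) hx

theorem greedy_last_is_max_general (A : List ℕ)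
    (i : ℕ) :
    (∀ j k, (hj : j < (greedy (A.take i)).length) →
      (hk : k < (greedy (A.take i)).length) → j ≤ k →
      ∀ x ∈ (greedy (A.take i))[k]'hk, x ≤ ((greedy (A.take i))[j]'hj).getLastI) ∧
    ∀ (h0 : 0 < (greedy (A.take i)).length),
      ∀ x ∈ A.take i, x ≤ ((greedy (A.take i))[0]'h0).getLastI := by
  have h := lastDominates_greedy (A.take i)
  refine ⟨fun j k hj hk hjk x hx => h.le_getLastI hj hk hjk hx, fun h0 x hx => ?_⟩
  obtain ⟨L, hL, hxL⟩ := List.mem_flatten.1 ((flatten_greedy_perm _).mem_iff.2 hx)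
  obtain ⟨k, hk, rfl⟩ := List.getElem_of_mem hL
  exact h.le_getLastI h0 hk k.zero_le hxL

/-- at every stage `i` of the greedy partition of a permutation,
the last element of `L_j` is the maximum of all elements in lists `L_k`, `k ≥ j`;
in particular the last element of `L_1` is the maximum element seen so far. -/
theorem greedy_last_is_max (n : ℕ) (A : List ℕ) (hA : A.Perm (List.range' 1 n))
    (i : ℕ) (hi : i ≤ A.length) :
    (∀ j k, (hj : j < (greedy (A.take i)).length) →
      (hk : k < (greedy (A.take i)).length) → j ≤ k →
      ∀ x ∈ (greedy (A.take i))[k]'hk, x ≤ ((greedy (A.take i))[j]'hj).getLastI) ∧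
    ∀ (h0 : 0 < (greedy (A.take i)).length),
      ∀ x ∈ A.take i, x ≤ ((greedy (A.take i))[0]'h0).getLastI :=
  greedy_last_is_max_general A i
end

section
/- Let A and B be permutations of {1,...,n} with SUS(A) ≤ 3 and SUS(B) ≤ 3. If M(A) = M(B) (their buffer sequences coincide entrywise), then A = B. -/
/-- The set of values appearing in the first `i` entries of `A` (indices `1..i`). -/
def prefSet (A : ℕ → ℕ) (i : ℕ) : Finset ℕ := (Finset.Icc 1 i).image A

/-- `H_i`: the maximum value among the first `i` entries (0 for `i = 0`). -/
def hi (A : ℕ → ℕ) (i : ℕ) : ℕ := (prefSet A i).sup id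

/-- `ACK_i`: the least positive integer not among the first `i` entries. -/
noncomputable def ackSeq (A : ℕ → ℕ) (i : ℕ) : ℕ := sInf {k | 0 < k ∧ k ∉ prefSet A i}

/-- The buffer size `M_i = H_i - (ACK_i - 1)`. -/
noncomputable def buf (A : ℕ → ℕ) (i : ℕ) : ℤ := (hi A i : ℤ) - ackSeq A i + 1

/-- `A` restricted to `{1,...,n}` is a permutation of `{1,...,n}`. -/
def IsPermOn (A : ℕ → ℕ) (n : ℕ) : Prop := Set.BijOn A (Set.Icc 1 n) (Set.Icc 1 n)

/-- The positions `1..n` can be partitioned into `k` classes, each of which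
induces a strictly increasing subsequence of `A`. -/
def SUSle (A : ℕ → ℕ) (n k : ℕ) : Prop :=
  ∃ c : ℕ → ℕ, (∀ i ∈ Finset.Icc 1 n, c i < k) ∧
    ∀ i j, i ∈ Finset.Icc 1 n → j ∈ Finset.Icc 1 n → i < j → c i = c j → A i < A j

/-- `SUS(A)`: minimum number of increasing subsequences partitioning `A₁,…,Aₙ`. -/
noncomputable def sus (A : ℕ → ℕ) (n : ℕ) : ℕ := sInf {k | SUSle A n k}

/-- `LDS(A)`: maximum length of a strictly decreasing subsequence of `A₁,…,Aₙ`. -/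
noncomputable def lds (A : ℕ → ℕ) (n : ℕ) : ℕ :=
  sSup {m | ∃ s : Fin m → ℕ, StrictMono s ∧ (∀ t, s t ∈ Finset.Icc 1 n) ∧
    ∀ t u : Fin m, t < u → A (s u) < A (s t)}

/-!
The buffer `M_i = H_i - ACK_i + 1` reveals the kind of each step: placing `ACK_i` lowers it
(or keeps it when `ACK_i = H_i + 1`), filling a gap strictly between `ACK_i` and `H_i` keeps it,
and a new maximum raises it. Hence the pair `(H_i, ACK_i)` is determined by `M`, and so is the
placed value except at gap-filling steps. At the first disagreement both permutations fill gaps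
with values `v < w < H`; in the one placing `w`, the entries `H`, `w`, `v` and the value `ACK`
still missing when `v` is finally placed form a decreasing subsequence of length `4`, which
cannot be covered by `3` increasing ones.
-/

theorem mem_prefSet {A : ℕ → ℕ} {i x : ℕ} :
    x ∈ prefSet A i ↔ ∃ q, 1 ≤ q ∧ q ≤ i ∧ A q = x := by
  simp [prefSet, and_assoc]

theorem prefSet_succ (A : ℕ → ℕ) (i : ℕ) :
    prefSet A (i + 1) = insert (A (i + 1)) (prefSet A i) := by
  rw [prefSet, ← Finset.insert_Icc_right_eq_Icc_add_one (by omega), Finset.image_insert]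
  rfl

theorem prefSet_mono (A : ℕ → ℕ) {i j : ℕ} (h : i ≤ j) : prefSet A i ⊆ prefSet A j :=
  Finset.image_subset_image (Finset.Icc_subset_Icc_right h)

theorem le_hi {A : ℕ → ℕ} {i x : ℕ} (h : x ∈ prefSet A i) : x ≤ hi A i :=
  Finset.le_sup (f := id) h

theorem hi_mem_prefSet {A : ℕ → ℕ} {i : ℕ} (h : 0 < hi A i) : hi A i ∈ prefSet A i := by
  obtain ⟨x, hx, hsup⟩ := Finset.exists_mem_eq_sup (prefSet A i)
    (Finset.nonempty_iff_ne_empty.2 fun he => by simp [hi, he] at h) id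
  rwa [hi, hsup]

theorem hi_succ (A : ℕ → ℕ) (i : ℕ) : hi A (i + 1) = max (A (i + 1)) (hi A i) := by
  rw [hi, prefSet_succ, Finset.sup_insert]
  rfl

theorem ackSeq_spec (A : ℕ → ℕ) (i : ℕ) : 0 < ackSeq A i ∧ ackSeq A i ∉ prefSet A i :=
  Nat.sInf_mem (s := {k | 0 < k ∧ k ∉ prefSet A i})
    ⟨hi A i + 1, Nat.succ_pos _, fun h => by have := le_hi h; omega⟩

theorem ackSeq_le {A : ℕ → ℕ} {i x : ℕ} (h0 : 0 < x) (h : x ∉ prefSet A i) : ackSeq A i ≤ x :=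
  Nat.sInf_le ⟨h0, h⟩

theorem ackSeq_le_hi_add_one (A : ℕ → ℕ) (i : ℕ) : ackSeq A i ≤ hi A i + 1 :=
  ackSeq_le (Nat.succ_pos _) fun h => by have := le_hi h; omega

theorem ackSeq_ne_hi (A : ℕ → ℕ) (i : ℕ) : ackSeq A i ≠ hi A i := by
  intro h
  have hpos : 0 < hi A i := h ▸ (ackSeq_spec A i).1
  exact (ackSeq_spec A i).2 (h ▸ hi_mem_prefSet hpos)

theorem ackSeq_mono (A : ℕ → ℕ) {i j : ℕ} (h : i ≤ j) : ackSeq A i ≤ ackSeq A j :=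
  ackSeq_le (ackSeq_spec A j).1 fun hc => (ackSeq_spec A j).2 (prefSet_mono A h hc)

theorem ackSeq_zero (A : ℕ → ℕ) : ackSeq A 0 = 1 :=
  le_antisymm (ackSeq_le Nat.one_pos (by simp [prefSet])) (ackSeq_spec A 0).1

theorem ackSeq_succ_of_ne {A : ℕ → ℕ} {i : ℕ} (h : A (i + 1) ≠ ackSeq A i) :
    ackSeq A (i + 1) = ackSeq A i := by
  refine le_antisymm (ackSeq_le (ackSeq_spec A i).1 ?_) (ackSeq_mono A i.le_succ)
  rw [prefSet_succ, Finset.mem_insert, not_or]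
  exact ⟨Ne.symm h, (ackSeq_spec A i).2⟩

theorem ackSeq_lt_ackSeq_succ {A : ℕ → ℕ} {i : ℕ} (h : A (i + 1) = ackSeq A i) :
    ackSeq A i < ackSeq A (i + 1) := by
  refine lt_of_le_of_ne (ackSeq_mono A i.le_succ) fun he => (ackSeq_spec A (i + 1)).2 ?_
  rw [prefSet_succ, ← he, ← h]
  exact Finset.mem_insert_self _ _

namespace IsPermOn

variable {A : ℕ → ℕ} {n : ℕ}

theorem not_mem_prefSet (hA : IsPermOn A n) {k m : ℕ} (hk : k ∈ Set.Icc 1 n) (hm : m < k) :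
    A k ∉ prefSet A m := by
  rw [mem_prefSet]
  rintro ⟨q, hq1, hqm, hq⟩
  have := hA.injOn ⟨hq1, by have := hk.2; omega⟩ hk hq
  omega

theorem exists_gt_of_not_mem_prefSet (hA : IsPermOn A n) {v i : ℕ} (hv : v ∈ Set.Icc 1 n)
    (h : v ∉ prefSet A i) : ∃ t, i < t ∧ t ≤ n ∧ A t = v := by
  obtain ⟨t, ⟨ht1, htn⟩, htv⟩ := hA.surjOn hv
  refine ⟨t, ?_, htn, htv⟩
  by_contra hti
  exact h (mem_prefSet.2 ⟨t, ht1, by omega, htv⟩)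

theorem pos_and_not_mem_prefSet (hA : IsPermOn A n) {i : ℕ} (hin : i + 1 ≤ n) :
    0 < A (i + 1) ∧ A (i + 1) ∉ prefSet A i :=
  ⟨(hA.mapsTo ⟨i.succ_pos, hin⟩).1, hA.not_mem_prefSet ⟨i.succ_pos, hin⟩ i.lt_succ_self⟩

end IsPermOn

theorem hi_ackSeq_transition {X : ℕ → ℕ} {i : ℕ} (hx0 : 0 < X (i + 1))
    (hx : X (i + 1) ∉ prefSet X i) :
    ackSeq X i ≤ X (i + 1) ∧ X (i + 1) ≠ hi X i ∧ ackSeq X i ≠ hi X i ∧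
      ackSeq X i ≤ hi X i + 1 ∧ hi X (i + 1) = max (X (i + 1)) (hi X i) ∧
      ackSeq X (i + 1) ≤ hi X (i + 1) + 1 ∧
      (X (i + 1) = ackSeq X i → ackSeq X i < ackSeq X (i + 1)) ∧
      (X (i + 1) ≠ ackSeq X i → ackSeq X (i + 1) = ackSeq X i) := by
  refine ⟨ackSeq_le hx0 hx, ?_, ackSeq_ne_hi X i, ackSeq_le_hi_add_one X i, hi_succ X i,
    ackSeq_le_hi_add_one X (i + 1), ackSeq_lt_ackSeq_succ, ackSeq_succ_of_ne⟩
  rintro h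
  exact hx (h ▸ hi_mem_prefSet (h ▸ hx0))

noncomputable def state (A : ℕ → ℕ) (i : ℕ) : ℕ × ℕ := (hi A i, ackSeq A i)

section TwoPerms

variable {X Y : ℕ → ℕ} {n : ℕ}

theorem state_eq_of_buf_eq (hX : IsPermOn X n) (hY : IsPermOn Y n)
    (hbuf : ∀ i ∈ Finset.Icc 1 n, buf X i = buf Y i) : ∀ i ≤ n, state X i = state Y i
  | 0, _ => by rw [state, state, ackSeq_zero, ackSeq_zero]; rfl
  | i + 1, hin => by
    have hprev := state_eq_of_buf_eq hX hY hbuf i (by omega)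
    have hb := hbuf (i + 1) (Finset.mem_Icc.2 ⟨i.succ_pos, hin⟩)
    obtain ⟨hX0, hXnew⟩ := hX.pos_and_not_mem_prefSet hin
    obtain ⟨hY0, hYnew⟩ := hY.pos_and_not_mem_prefSet hin
    have := hi_ackSeq_transition hX0 hXnew
    have := hi_ackSeq_transition hY0 hYnew
    simp only [state, buf, Prod.mk.injEq] at hprev hb ⊢
    omega

theorem lt_hi_of_state_eq_of_ne (hX : IsPermOn X n) (hY : IsPermOn Y n) {i : ℕ}
    (hin : i + 1 ≤ n) (hst : state X i = state Y i) (hst' : state X (i + 1) = state Y (i + 1))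
    (hne : X (i + 1) ≠ Y (i + 1)) : X (i + 1) < hi X i := by
  obtain ⟨hX0, hXnew⟩ := hX.pos_and_not_mem_prefSet hin
  obtain ⟨hY0, hYnew⟩ := hY.pos_and_not_mem_prefSet hin
  have := hi_ackSeq_transition hX0 hXnew
  have := hi_ackSeq_transition hY0 hYnew
  simp only [state, Prod.mk.injEq] at hst hst'
  omega

end TwoPerms

namespace SUSle

variable {A : ℕ → ℕ} {n k : ℕ}

theorem of_sus_le (h : sus A n ≤ k) : SUSle A n k := by
  have hid : SUSle A n (n + 1) :=
    ⟨id, fun i hi => Nat.lt_succ_of_le (Finset.mem_Icc.1 hi).2,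
      fun i j _ _ hij hc => absurd hc hij.ne⟩
  obtain ⟨c, hc, hinc⟩ := Nat.sInf_mem (s := {k | SUSle A n k}) ⟨n + 1, hid⟩
  exact ⟨c, fun i hi => (hc i hi).trans_le h, hinc⟩

theorem card_le_of_strictAnti (h : SUSle A n k) {m : ℕ} {s : Fin m → ℕ} (hs : StrictMono s)
    (hmem : ∀ t, s t ∈ Finset.Icc 1 n) (hanti : StrictAnti (A ∘ s)) : m ≤ k := by
  obtain ⟨c, hc, hinc⟩ := h
  have hsame : ∀ t u, t < u → c (s t) ≠ c (s u) := fun t u htu he =>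
    (hanti htu).not_gt (hinc _ _ (hmem t) (hmem u) (hs htu) he)
  simpa using Fintype.card_le_of_injective (fun t => (⟨c (s t), hc _ (hmem t)⟩ : Fin k))
    fun t u he => by
      by_contra hne
      rcases lt_or_gt_of_ne hne with htu | hut
      · exact hsame t u htu (Fin.val_eq_of_eq he)
      · exact hsame u t hut (Fin.val_eq_of_eq he).symm

end SUSle

theorem exists_strictAnti_four_of_first_ne {X Y : ℕ → ℕ} {n u : ℕ}
    (hX : IsPermOn X n) (hY : IsPermOn Y n)
    (hbuf : ∀ i ∈ Finset.Icc 1 n, buf X i = buf Y i) (hun : u + 1 ≤ n)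
    (hpref : prefSet X u = prefSet Y u) (hlt : Y (u + 1) < X (u + 1)) :
    ∃ s : Fin 4 → ℕ, StrictMono s ∧ (∀ t, s t ∈ Finset.Icc 1 n) ∧ StrictAnti (X ∘ s) := by
  have hstate := state_eq_of_buf_eq hX hY hbuf
  have hw : X (u + 1) < hi X u :=
    lt_hi_of_state_eq_of_ne hX hY hun (hstate u (by omega)) (hstate (u + 1) hun) hlt.ne'
  obtain ⟨p, hp1, hpu, hpH⟩ := mem_prefSet.1 (hi_mem_prefSet (by omega : 0 < hi X u))
  have hv : Y (u + 1) ∈ Set.Icc 1 n := hY.mapsTo ⟨u.succ_pos, hun⟩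
  have hvX : Y (u + 1) ∉ prefSet X (u + 1) := by
    rw [prefSet_succ, hpref, Finset.mem_insert, not_or]
    exact ⟨hlt.ne, hY.not_mem_prefSet ⟨u.succ_pos, hun⟩ u.lt_succ_self⟩
  obtain ⟨t, hut, htn, htv⟩ := hX.exists_gt_of_not_mem_prefSet hv hvX
  obtain ⟨t, rfl⟩ : ∃ t', t = t' + 1 := ⟨t - 1, by omega⟩
  have ha_le : ackSeq X t ≤ Y (u + 1) :=
    ackSeq_le hv.1 (htv ▸ hX.not_mem_prefSet ⟨t.succ_pos, htn⟩ t.lt_succ_self)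
  have ha_ne : ackSeq X t ≠ Y (u + 1) := by
    rw [show ackSeq X t = ackSeq Y t from congrArg Prod.snd (hstate t (by omega))]
    rintro he
    exact (ackSeq_spec Y t).2 (he ▸ mem_prefSet.2 ⟨u + 1, u.succ_pos, by omega, rfl⟩)
  have ha_notin : ackSeq X t ∉ prefSet X (t + 1) := by
    rw [prefSet_succ, Finset.mem_insert, not_or, htv]
    exact ⟨ha_ne, (ackSeq_spec X t).2⟩
  obtain ⟨r, htr, hrn, hra⟩ :=
    hX.exists_gt_of_not_mem_prefSet ⟨(ackSeq_spec X t).1, ha_le.trans hv.2⟩ ha_notin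
  refine ⟨![p, u + 1, t + 1, r], ?_, ?_, ?_⟩
  · simp [Fin.strictMono_iff_lt_succ, Fin.forall_fin_succ]
    omega
  · simp [Fin.forall_fin_succ]
    omega
  · simp [Fin.strictAnti_iff_succ_lt, Fin.forall_fin_succ, hpH, htv, hra]
    omega

/-- Main theorem: two permutations of `{1,…,n}` with `SUS ≤ 3` and
identical buffer sequences are identical. -/
theorem buffer_determines_perm (n : ℕ) (A B : ℕ → ℕ)
    (hA : IsPermOn A n) (hB : IsPermOn B n)
    (hsA : sus A n ≤ 3) (hsB : sus B n ≤ 3)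
    (hbuf : ∀ i ∈ Finset.Icc 1 n, buf A i = buf B i) :
    ∀ i ∈ Finset.Icc 1 n, A i = B i := by
  by_contra! hex
  obtain ⟨k, ⟨hk, hne⟩, hmin⟩ : ∃ k, (k ∈ Finset.Icc 1 n ∧ A k ≠ B k) ∧
      ∀ j < k, ¬ (j ∈ Finset.Icc 1 n ∧ A j ≠ B j) :=
    ⟨Nat.find hex, Nat.find_spec hex, fun j => Nat.find_min hex⟩
  obtain ⟨hk1, hkn⟩ := Finset.mem_Icc.1 hk
  obtain ⟨u, rfl⟩ : ∃ u, k = u + 1 := ⟨k - 1, by omega⟩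
  have hpref : prefSet A u = prefSet B u := Finset.image_congr fun j hj => by
    obtain ⟨hj1, hju⟩ := Finset.mem_Icc.1 hj
    by_contra hAB
    exact hmin j (by omega) ⟨Finset.mem_Icc.2 ⟨hj1, by omega⟩, hAB⟩
  rcases lt_or_gt_of_ne hne with hlt | hgt
  · obtain ⟨s, hs, hmem, hanti⟩ := exists_strictAnti_four_of_first_ne hB hA
      (fun i hi => (hbuf i hi).symm) hkn hpref.symm hlt
    exact absurd ((SUSle.of_sus_le hsB).card_le_of_strictAnti hs hmem hanti) (by norm_num)
  · obtain ⟨s, hs, hmem, hanti⟩ := exists_strictAnti_four_of_first_ne hA hB hbuf hkn hpref hgt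
    exact absurd ((SUSle.of_sus_le hsA).card_le_of_strictAnti hs hmem hanti) (by norm_num)
end
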